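/- arXiv:math/0603272 — 4 statements merged into one kernel-verified Lean document; each statement's English description precedes it below -/
import Mathlib

section
/- Fix k ≥ 1 and r ≥ 1. Two nonempty words in the alphabet {1,…,k} are called cyclically equivalent if one is a cyclic rotation of the other; choose a set W consisting of exactly one representative of each cyclic-equivalence class of nonempty words of length ≤ r. Then there exists N such that for all n ≥ N the following family of functions (M_n(ℂ))^k → ℂ is linearly independent over ℂ: for each finite multiset {w₁, …, w_l} of elements of W (possibly empty) whose total length |w₁| + ⋯ + |w_l| is ≤ r, the function (A₁,…,A_k) ↦ ∏_{j=1}^{l} Tr(A_{w_j(1)} ⋯ A_{w_j(|w_j|)}) (the empty multiset giving the constant function 1). -/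
/-!
Fix a multiset `s₀` of words from `W` of total length at most `n` and lay its words out as
disjoint labelled cycles inside `Fin n`: `σ` moves each vertex to the next one on its cycle
and `lb` records its letter. Substituting the matrices `(A_i)_{uv} = X_u` if `lb u = i` and
`v = σ u` (and `0` otherwise) turns `Tr(A_w)` into a sum of monomials, one for each closed
`σ`-orbit segment spelling `w`. Hence the coefficient of the squarefree monomial
`∏_{u on the cycles} X_u` in `∏_{w ∈ s} Tr(A_w)` counts the tilings of the cycles by closed
orbit segments spelling the words of `s`. Such a tiling uses every cycle exactly once, so it
exists iff `s` and `s₀` have the same cyclic words, i.e. iff `s = s₀`. Since a polynomial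
over `ℂ` is determined by its function, this coefficient extends to a linear functional on
all functions that isolates `s₀` among the trace products.
-/

noncomputable section

/-- The product of trace functions associated to a multiset `s` of words in letters `1,…,k`:
`(A₁,…,A_k) ↦ ∏_{w ∈ s} Tr(A_{w(1)} ⋯ A_{w(|w|)})`. -/
def traceProdFn (n k : ℕ) (s : Multiset (List (Fin k))) :
    (Fin k → Matrix (Fin n) (Fin n) ℂ) → ℂ :=
  fun A => (s.map fun w => Matrix.trace (w.map A).prod).prod

open Function MvPolynomial

theorem linearIndependent_of_forall_exists_dual {K V ι : Type*} [Field K] [AddCommGroup V]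
    [Module K V] {v : ι → V}
    (h : ∀ i, ∃ f : Module.Dual K V, f (v i) ≠ 0 ∧ ∀ j, j ≠ i → f (v j) = 0) :
    LinearIndependent K v := by
  choose f hf₀ hf using h
  refine .of_pairwise_dual_eq_zero_one v (fun i => (f i (v i))⁻¹ • f i)
    (fun i j hij => by simp [hf i j hij.symm]) fun i => by simp [hf₀ i]

theorem exists_linearMap_eq_of_eval {K X σ : Type*} [Field K] [Infinite K] (a : (σ → K) → X) :
    ∃ Φ : (X → K) →ₗ[K] MvPolynomial σ K,
      ∀ (F : X → K) (P : MvPolynomial σ K), (∀ z, F (a z) = eval z P) → Φ F = P := by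
  let E : MvPolynomial σ K →ₗ[K] (σ → K) → K := LinearMap.pi fun z => (aeval z).toLinearMap
  have hE : LinearMap.ker E = ⊥ := LinearMap.ker_eq_bot.2 fun P Q h =>
    MvPolynomial.funext fun z => by simpa [E] using congrFun h z
  obtain ⟨g, hg⟩ := E.exists_leftInverse_of_injective hE
  refine ⟨g ∘ₗ LinearMap.funLeft K K a, fun F P hFP => ?_⟩
  have hF : F ∘ a = E P := funext fun z => by simp [E, hFP]
  change g (F ∘ a) = P
  rw [hF]
  exact LinearMap.congr_fun hg P

theorem Multiset.eq_of_map_eq_of_injOn {α β : Type*} [Nonempty α] {f : α → β} {W : Set α}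
    (hf : W.InjOn f) {s t : Multiset α} (hs : ∀ a ∈ s, a ∈ W) (ht : ∀ a ∈ t, a ∈ W)
    (h : s.map f = t.map f) : s = t := by
  have hinv : ∀ u : Multiset α, (∀ a ∈ u, a ∈ W) → (u.map f).map (invFunOn f W) = u :=
    fun u hu => by
      rw [Multiset.map_map]
      exact (Multiset.map_congr rfl fun a ha => hf.leftInvOn_invFunOn (hu a ha)).trans u.map_id
  rw [← hinv s hs, h, hinv t ht]

def traceProd {R n ι : Type*} [CommSemiring R] [Fintype n] [DecidableEq n]
    (s : Multiset (List ι)) (A : ι → Matrix n n R) : R :=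
  (s.map fun w => (w.map A).prod.trace).prod

theorem RingHom.map_traceProd {R S n ι : Type*} [CommSemiring R] [CommSemiring S] [Fintype n]
    [DecidableEq n] (f : R →+* S) (s : Multiset (List ι)) (A : ι → Matrix n n R) :
    f (traceProd s A) = traceProd s fun i => (A i).map f := by
  simp only [traceProd, map_multiset_prod, Multiset.map_map]
  refine congrArg _ (Multiset.map_congr rfl fun w _ => ?_)
  change f (w.map A).prod.trace = _
  rw [AddMonoidHom.map_trace, ← RingHom.mapMatrix_apply, map_list_prod, List.map_map]
  rfl

section Orbits

variable {V : Type*} {σ : V → V}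

theorem Function.IsPeriodicPt.list_iterate_iterate_eq_rotate {x : V} {m : ℕ}
    (hx : IsPeriodicPt σ m x) (a : ℕ) :
    List.iterate σ (σ^[a] x) m = (List.iterate σ x m).rotate a := by
  refine List.ext_getElem (by simp) fun j h₁ h₂ => ?_
  simp only [List.getElem_iterate, List.getElem_rotate, List.length_iterate, hx.iterate_mod_apply,
    ← iterate_add_apply]

theorem Function.IsPeriodicPt.minimalPeriod_eq_of_nodup {x : V} {m : ℕ}
    (hx : IsPeriodicPt σ m x) (hm : 0 < m) (hnd : (List.iterate σ x m).Nodup) :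
    minimalPeriod σ x = m := by
  refine le_antisymm (hx.minimalPeriod_le hm) (not_lt.1 fun hlt => ?_)
  have hpos := hx.minimalPeriod_pos hm
  have hrepeat : (List.iterate σ x m)[minimalPeriod σ x]'(by simpa using hlt) =
      (List.iterate σ x m)[0]'(by simpa using hm) := by
    simp [iterate_minimalPeriod]
  exact hpos.ne' (hnd.getElem_inj_iff.1 hrepeat)

theorem isRotated_list_iterate_of_mem {x y : V} {m l : ℕ} (hx : IsPeriodicPt σ m x)
    (hy : IsPeriodicPt σ l y) (hl : 0 < l) (hxnd : (List.iterate σ x m).Nodup)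
    (hynd : (List.iterate σ y l).Nodup) (hyx : y ∈ List.iterate σ x m) :
    List.iterate σ y l ~r List.iterate σ x m := by
  obtain ⟨a, ha, rfl⟩ := List.mem_iterate.1 hyx
  have hrot := hx.list_iterate_iterate_eq_rotate a
  have hperiod := (hx.apply_iterate a).minimalPeriod_eq_of_nodup (by omega)
    (hrot ▸ List.nodup_rotate.2 hxnd)
  obtain rfl : l = m := (hy.minimalPeriod_eq_of_nodup hl hynd).symm.trans hperiod
  rw [hrot]
  exact List.IsRotated.forall _ a

/- A closed orbit segment without repetitions is a whole σ-cycle, so segments that tile a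
multiset without repetitions are determined, up to rotation, by the points they contain. -/
theorem map_cycle_eq_of_sum_eq {F G : Multiset (V × ℕ)}
    (hF : ∀ x ∈ F, 0 < x.2 ∧ IsPeriodicPt σ x.2 x.1)
    (hG : ∀ y ∈ G, 0 < y.2 ∧ IsPeriodicPt σ y.2 y.1)
    (hnd : (F.map fun x => (List.iterate σ x.1 x.2 : Multiset V)).sum.Nodup)
    (h : (F.map fun x => (List.iterate σ x.1 x.2 : Multiset V)).sum =
      (G.map fun y => (List.iterate σ y.1 y.2 : Multiset V)).sum) :
    F.map (fun x => (List.iterate σ x.1 x.2 : Cycle V)) =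
      G.map fun y => (List.iterate σ y.1 y.2 : Cycle V) := by
  induction F using Multiset.induction_on generalizing G with
  | empty =>
    suffices G = 0 by simp [this]
    refine Multiset.eq_zero_of_forall_notMem fun y hy => ?_
    have hle := Multiset.le_sum_of_mem (Multiset.mem_map_of_mem
      (fun y => (List.iterate σ y.1 y.2 : Multiset V)) hy)
    rw [← h] at hle
    simp [(hG y hy).1.ne'] at hle
  | cons x F ih =>
    simp only [Multiset.map_cons, Multiset.sum_cons] at hnd h ⊢
    obtain ⟨hx0, hx⟩ := hF x (Multiset.mem_cons_self x F)
    have hxmem : x.1 ∈ (G.map fun y => (List.iterate σ y.1 y.2 : Multiset V)).sum := by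
      rw [← h]
      exact Multiset.mem_add.2 (Or.inl (List.mem_iterate.2 ⟨0, hx0, rfl⟩))
    obtain ⟨_, hs, hxy⟩ := Multiset.mem_join.1 hxmem
    obtain ⟨y, hyG, rfl⟩ := Multiset.mem_map.1 hs
    obtain ⟨G, rfl⟩ := Multiset.exists_cons_of_mem hyG
    simp only [Multiset.map_cons, Multiset.sum_cons] at h ⊢
    have hxnd := (Multiset.nodup_add.1 hnd).1
    have hynd := (Multiset.nodup_add.1 (h ▸ hnd)).1
    obtain ⟨-, hy⟩ := hG y (Multiset.mem_cons_self y G)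
    have hrot := isRotated_list_iterate_of_mem hy hx hx0 hynd hxnd hxy
    rw [Multiset.coe_eq_coe.2 hrot.perm] at h
    rw [Cycle.coe_eq_coe.2 hrot, ih (fun x hx => hF x (Multiset.mem_cons_of_mem hx))
      (fun y hy => hG y (Multiset.mem_cons_of_mem hy)) (Multiset.nodup_add.1 hnd).2.1
      (add_left_cancel h)]

end Orbits


section LabelledGraph

variable {V ι R : Type*} [Fintype V] [DecidableEq V] [DecidableEq ι] [CommSemiring R]
  (σ : V → V) (lb : V → ι)

def labelAdjMatrix (i : ι) : Matrix V V (MvPolynomial V R) :=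
  Matrix.of fun u v => if lb u = i ∧ σ u = v then X u else 0

theorem list_prod_labelAdjMatrix_apply (w : List ι) (u v : V) :
    (w.map (labelAdjMatrix (R := R) σ lb)).prod u v =
      if σ^[w.length] u = v ∧ (List.iterate σ u w.length).map lb = w then
        monomial (Multiset.toFinsupp (List.iterate σ u w.length)) 1 else 0 := by
  induction w generalizing u with
  | nil => simp [Matrix.one_apply]
  | cons a w ih =>
    rw [List.map_cons, List.prod_cons, Matrix.mul_apply, Fintype.sum_eq_single (σ u)
      (fun x hx => by simp [labelAdjMatrix, Ne.symm hx]), ih]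
    by_cases ha : lb u = a
    · simp [labelAdjMatrix, ha, List.iterate, ← Multiset.cons_coe, ← Multiset.singleton_add,
        monomial_single_add]
    · simp [labelAdjMatrix, ha, List.iterate]

theorem trace_list_prod_labelAdjMatrix (w : List ι) :
    (w.map (labelAdjMatrix (R := R) σ lb)).prod.trace =
      ∑ u, if IsPeriodicPt σ w.length u ∧ (List.iterate σ u w.length).map lb = w then
        monomial (Multiset.toFinsupp (List.iterate σ u w.length)) 1 else 0 :=
  Finset.sum_congr rfl fun u _ => list_prod_labelAdjMatrix_apply σ lb w u u

end LabelledGraph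

section CycleCover

variable {V ι : Type*} (σ : V → V) (lb : V → ι)

def IsCycleCover (T : Multiset V) (L : List (List ι)) (p : Fin L.length → V) : Prop :=
  (∀ i : Fin L.length,
      IsPeriodicPt σ L[i].length (p i) ∧ (List.iterate σ (p i) L[i].length).map lb = L[i]) ∧
    ∑ i : Fin L.length, (List.iterate σ (p i) L[i].length : Multiset V) = T

variable {σ lb}

theorem IsCycleCover.exists_segments {T : Multiset V} {L : List (List ι)} {p : Fin L.length → V}
    (hp : IsCycleCover σ lb T L p) (hL : ∀ w ∈ L, w ≠ []) :
    ∃ F : Multiset (V × ℕ), (∀ x ∈ F, 0 < x.2 ∧ IsPeriodicPt σ x.2 x.1) ∧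
      (F.map fun x => (List.iterate σ x.1 x.2 : Multiset V)).sum = T ∧
      (L : Multiset (List ι)).map (↑) =
        (F.map fun x => (List.iterate σ x.1 x.2 : Cycle V)).map (Cycle.map lb) := by
  refine ⟨Finset.univ.val.map fun i => (p i, L[i].length), ?_, ?_, ?_⟩
  · simp only [Multiset.mem_map]
    rintro _ ⟨i, -, rfl⟩
    exact ⟨List.length_pos_of_ne_nil (hL _ (List.getElem_mem _)), (hp.1 i).1⟩
  · rw [Multiset.map_map, ← hp.2]
    rfl
  · conv_lhs => rw [← List.ofFn_getElem (xs := L), ← Fin.univ_val_map]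
    simp only [Multiset.map_map]
    refine Multiset.map_congr rfl fun i _ => ?_
    change (L[i] : Cycle ι) = Cycle.map lb (List.iterate σ (p i) L[i].length)
    rw [Cycle.map_coe, (hp.1 i).2]

theorem IsCycleCover.map_coe_eq_of_nodup {T : Multiset V} {L L' : List (List ι)}
    {p : Fin L.length → V} {q : Fin L'.length → V} (hp : IsCycleCover σ lb T L p)
    (hq : IsCycleCover σ lb T L' q) (hT : T.Nodup) (hL : ∀ w ∈ L, w ≠ [])
    (hL' : ∀ w ∈ L', w ≠ []) :
    (L : Multiset (List ι)).map ((↑) : List ι → Cycle ι) = (L' : Multiset (List ι)).map (↑) := by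
  obtain ⟨F, hF, hFT, hLF⟩ := hp.exists_segments hL
  obtain ⟨G, hG, hGT, hLG⟩ := hq.exists_segments hL'
  rw [hLF, hLG, map_cycle_eq_of_sum_eq hF hG (hFT ▸ hT) (hFT.trans hGT.symm)]

end CycleCover

theorem coeff_traceProd_labelAdjMatrix {V ι R : Type*} [Fintype V] [DecidableEq V]
    [DecidableEq ι] [CommSemiring R] (σ : V → V) (lb : V → ι) (T : Multiset V)
    (L : List (List ι)) :
    coeff (Multiset.toFinsupp T) (traceProd (L : Multiset (List ι)) (labelAdjMatrix (R := R) σ lb))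
      = Nat.card {p // IsCycleCover σ lb T L p} := by
  classical
  rw [traceProd, Multiset.map_coe, Multiset.prod_coe, ← Fin.prod_univ_fun_getElem]
  simp only [trace_list_prod_labelAdjMatrix, Fintype.prod_sum, Finset.prod_ite_zero,
    Finset.mem_univ, forall_const, ← monomial_sum_one, coeff_sum, apply_ite (coeff _),
    coeff_monomial, coeff_zero, ← map_sum, (Multiset.toFinsupp).injective.eq_iff, ← ite_and,
    Finset.sum_boole, Nat.card_eq_fintype_card, Fintype.card_subtype, IsCycleCover,
    Fin.getElem_fin]

section Model

variable {ι : Type*} (L : List (List ι))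

theorem val_finRotate_iterate {m : ℕ} (c : Fin m) (j : ℕ) :
    ((finRotate m)^[j] c : ℕ) = (c + j) % m := by
  induction j with
  | zero => simp [Nat.mod_eq_of_lt c.isLt]
  | succ j ih =>
    have := c.neZero
    rw [iterate_succ_apply', finRotate_apply, Fin.val_add, ih, Fin.val_one', Nat.add_mod_mod,
      Nat.mod_add_mod, add_assoc]

def blockRotate (x : Σ i : Fin L.length, Fin L[i].length) :
    Σ i : Fin L.length, Fin L[i].length :=
  ⟨x.1, finRotate _ x.2⟩

def blockLabel (x : Σ i : Fin L.length, Fin L[i].length) : ι :=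
  L[x.1][x.2]

theorem blockRotate_iterate (i : Fin L.length) (c : Fin L[i].length) (j : ℕ) :
    (blockRotate L)^[j] ⟨i, c⟩ = ⟨i, (finRotate _)^[j] c⟩ :=
  (Semiconj.iterate_right (f := Sigma.mk i) (ga := finRotate _) (gb := blockRotate L)
    (fun _ => rfl) j c).symm

theorem isCycleCover_blockRotate (hL : ∀ w ∈ L, w ≠ []) :
    IsCycleCover (blockRotate L) (blockLabel L) Finset.univ.val L
      fun i => ⟨i, ⟨0, List.length_pos_of_ne_nil (hL _ (List.getElem_mem _))⟩⟩ := by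
  have hseg : ∀ i : Fin L.length, ∀ h : 0 < L[i].length,
      List.iterate (blockRotate L) ⟨i, ⟨0, h⟩⟩ L[i].length =
        (List.finRange L[i].length).map (Sigma.mk i) := fun i h =>
    List.ext_getElem (by simp) fun j h₁ h₂ => by
      simp only [List.getElem_iterate, blockRotate_iterate, List.getElem_map,
        List.getElem_finRange]
      congr 1
      ext
      simp only [val_finRotate_iterate, zero_add]
      exact Nat.mod_eq_of_lt (by simpa using h₁)
  refine ⟨fun i => ⟨?_, ?_⟩, ?_⟩
  · change (blockRotate L)^[_] ⟨i, _⟩ = ⟨i, _⟩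
    rw [blockRotate_iterate]
    congr 1
    ext
    simp [val_finRotate_iterate]
  · rw [hseg, List.map_map]
    exact List.map_getElem_finRange L[i]
  · simp only [hseg]
    rw [← Finset.univ_sigma_univ]
    change _ = (Finset.univ.val.map fun i => Finset.univ.val.map (Sigma.mk i)).sum
    simp [Fin.univ_val_map, List.ofFn_eq_map, Fin.sum_univ_def]

end Model

theorem Function.Semiconj.map_list_iterate {α β : Type*} {e : α → β} {τ : α → α} {σ : β → β}
    (h : Semiconj e τ σ) (x : α) (m : ℕ) :
    (List.iterate τ x m).map e = List.iterate σ (e x) m := by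
  induction m generalizing x with
  | zero => rfl
  | succ m ih => simp [List.iterate, ih, h x]

theorem IsCycleCover.map_of_semiconj {C V ι : Type*} {τ : C → C} {κ : C → ι} {σ : V → V}
    {lb : V → ι} {T : Multiset C} {L : List (List ι)} {p : Fin L.length → C}
    (hp : IsCycleCover τ κ T L p) {e : C → V} (he : Semiconj e τ σ) (hlb : lb ∘ e = κ) :
    IsCycleCover σ lb (T.map e) L (e ∘ p) := by
  refine ⟨fun i => ⟨(hp.1 i).1.map he, ?_⟩, ?_⟩
  · rw [comp_apply, ← he.map_list_iterate, List.map_map, hlb, (hp.1 i).2]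
  · simp only [comp_apply, ← he.map_list_iterate, ← Multiset.map_coe, ← hp.2]
    rw [← Multiset.mapAddMonoidHom_apply, map_sum]
    rfl

theorem exists_isCycleCover {V ι : Type*} [Fintype V] [Nonempty ι] (L : List (List ι))
    (hL : ∀ w ∈ L, w ≠ []) (hV : (L.map List.length).sum ≤ Fintype.card V) :
    ∃ (σ : V → V) (lb : V → ι) (T : Multiset V) (p : Fin L.length → V),
      T.Nodup ∧ IsCycleCover σ lb T L p := by
  obtain ⟨e⟩ : Nonempty ((Σ i : Fin L.length, Fin L[i].length) ↪ V) :=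
    Function.Embedding.nonempty_of_card_le (by simpa [Fin.sum_univ_fun_getElem] using hV)
  exact ⟨extend e (e ∘ blockRotate L) id, extend e (blockLabel L) fun _ => Classical.arbitrary ι,
    _, _, Finset.univ.nodup.map e.injective,
    (isCycleCover_blockRotate L hL).map_of_semiconj
      (fun x => (e.injective.extend_apply (e ∘ blockRotate L) id x).symm)
      (funext fun x => e.injective.extend_apply _ _ x)⟩

theorem exists_dual_isolating_traceProdFn {k n : ℕ} [NeZero k] {W : Set (List (Fin k))}
    (hW : W.InjOn ((↑) : List (Fin k) → Cycle (Fin k))) (hWne : ∀ w ∈ W, w ≠ [])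
    {s₀ : Multiset (List (Fin k))} (hs₀ : ∀ w ∈ s₀, w ∈ W) (hn : (s₀.map List.length).sum ≤ n) :
    ∃ f : Module.Dual ℂ ((Fin k → Matrix (Fin n) (Fin n) ℂ) → ℂ),
      f (traceProdFn n k s₀) ≠ 0 ∧ ∀ s, (∀ w ∈ s, w ∈ W) → s ≠ s₀ → f (traceProdFn n k s) = 0 := by
  have hne : ∀ s : Multiset (List (Fin k)), (∀ w ∈ s, w ∈ W) → ∀ w ∈ s.toList, w ≠ [] :=
    fun s hs w hw => hWne w (hs w (Multiset.mem_toList.1 hw))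
  obtain ⟨σ, lb, T, p, hT, hp⟩ := exists_isCycleCover (V := Fin n) s₀.toList (hne s₀ hs₀)
    (by simpa [← Multiset.sum_coe, ← Multiset.map_coe] using hn)
  obtain ⟨Φ, hΦ⟩ :=
    exists_linearMap_eq_of_eval fun z i => (labelAdjMatrix (R := ℂ) σ lb i).map (eval z)
  have hcoeff : ∀ s : Multiset (List (Fin k)), (lcoeff ℂ (Multiset.toFinsupp T) ∘ₗ Φ)
      (traceProdFn n k s) = Nat.card {q // IsCycleCover σ lb T s.toList q} := fun s => by
    rw [LinearMap.comp_apply, hΦ (traceProdFn n k s) (traceProd s (labelAdjMatrix σ lb))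
      fun z => (RingHom.map_traceProd (eval z) s _).symm, lcoeff_apply,
      ← coeff_traceProd_labelAdjMatrix, Multiset.coe_toList]
  refine ⟨lcoeff ℂ (Multiset.toFinsupp T) ∘ₗ Φ, ?_, fun s hs hss₀ => ?_⟩
  · rw [hcoeff, Nat.cast_ne_zero, Nat.card_ne_zero]
    exact ⟨⟨p, hp⟩, inferInstance⟩
  · rw [hcoeff, Nat.cast_eq_zero, Nat.card_eq_zero]
    refine Or.inl ⟨fun ⟨q, hq⟩ => hss₀ ?_⟩
    have hcyc := hq.map_coe_eq_of_nodup hp hT (hne s hs) (hne s₀ hs₀)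
    rw [Multiset.coe_toList, Multiset.coe_toList] at hcyc
    exact Multiset.eq_of_map_eq_of_injOn hW hs hs₀ hcyc

theorem stmt_10_general (k r : ℕ) (hk : 1 ≤ k) (W : Set (List (Fin k)))
    (hWsub : ∀ w ∈ W, w ≠ [] ∧ w.length ≤ r)
    (hWrep : ∀ w : List (Fin k), w ≠ [] → w.length ≤ r →
      ∃! w' : List (Fin k), w' ∈ W ∧ List.IsRotated w w') :
    ∃ N : ℕ, ∀ n : ℕ, N ≤ n →
      LinearIndependent ℂ
        (fun s : {s : Multiset (List (Fin k)) //
            (∀ w ∈ s, w ∈ W) ∧ (s.map List.length).sum ≤ r} =>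
          traceProdFn n k s.val) := by
  have : NeZero k := ⟨by omega⟩
  have hW : W.InjOn ((↑) : List (Fin k) → Cycle (Fin k)) := fun w₁ h₁ w₂ h₂ h =>
    (hWrep w₁ (hWsub w₁ h₁).1 (hWsub w₁ h₁).2).unique ⟨h₁, List.IsRotated.refl _⟩
      ⟨h₂, Cycle.coe_eq_coe.1 h⟩
  refine ⟨r, fun n hrn => linearIndependent_of_forall_exists_dual fun s₀ => ?_⟩
  obtain ⟨f, hf₀, hf⟩ := exists_dual_isolating_traceProdFn hW (fun w hw => (hWsub w hw).1)
    s₀.2.1 (s₀.2.2.trans hrn)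
  exact ⟨f, hf₀, fun s hs => hf s.1 s.2.1 (Subtype.coe_ne_coe.2 hs)⟩

/-- STATEMENT 10: if `W` is a set of representatives of the cyclic-equivalence classes of
nonempty words of length `≤ r` in `k` letters, then for all sufficiently large `n` the
products of trace functions indexed by multisets of elements of `W` of total length `≤ r`
are linearly independent functions on `k`-tuples of `n×n` matrices. -/
theorem stmt_10 (k r : ℕ) (hk : 1 ≤ k) (hr : 1 ≤ r) (W : Set (List (Fin k)))
    (hWsub : ∀ w ∈ W, w ≠ [] ∧ w.length ≤ r)
    (hWrep : ∀ w : List (Fin k), w ≠ [] → w.length ≤ r →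
      ∃! w' : List (Fin k), w' ∈ W ∧ List.IsRotated w w') :
    ∃ N : ℕ, ∀ n : ℕ, N ≤ n →
      LinearIndependent ℂ
        (fun s : {s : Multiset (List (Fin k)) //
            (∀ w ∈ s, w ∈ W) ∧ (s.map List.length).sum ≤ r} =>
          traceProdFn n k s.val) :=
  stmt_10_general k r hk W hWsub hWrep
end
end

section
/- Let F = ℂ⟨v₁,…,v_N⟩ be the free associative ℂ-algebra with generator v_k assigned degree d_k ≥ 1, and let e₁,…,e_p be pairwise non-overlapping words in the letters v₁,…,v_N, with deg e_j the sum of the degrees of the letters of e_j. Let J be the two-sided ideal generated by e₁,…,e_p and A = F/J with the induced grading, a_m = dim_ℂ A[m]. Then in ℤ[[t]]: (Σ_{m≥0} a_m t^m) · (1 − Σ_{k=1}^{N} t^{d_k} + Σ_{j=1}^{p} t^{deg e_j}) = 1. -/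
noncomputable section

/-- The product in the free algebra of the generators listed by `l`. -/
def wordProd {X : Type*} (l : List X) : FreeAlgebra ℂ X :=
  (l.map (FreeAlgebra.ι ℂ)).prod

/-- The weight-`m` graded component of the free algebra (generator `k` of degree `d k`). -/
def wt {X : Type*} (d : X → ℕ) (m : ℕ) : Submodule ℂ (FreeAlgebra ℂ X) :=
  Submodule.span ℂ {x | ∃ l : List X, (l.map d).sum = m ∧ x = wordProd l}

/-- A family of (nonempty) words is pairwise non-overlapping (strongly free) if no word is a
contiguous subword of a different one, and no proper nonempty suffix of one equals a proper
nonempty prefix of another (including of itself). -/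
def PairwiseNonOverlapping {X : Type*} {p : ℕ} (w : Fin p → List X) : Prop :=
  (∀ i j : Fin p, i ≠ j → ¬ (w i <:+: w j)) ∧
    (∀ i j : Fin p, ∀ u : List X,
      u ≠ [] → u <:+ w i → u ≠ w i → u <+: w j → u ≠ w j → False)

/-! The ideal generated by the `e_j` is spanned by the words containing some `e_j`, so `a_m` is
the number of words of weight `m` avoiding every `e_j`; let `h(t)` be their generating function.
Count the words `l` whose prefix `l.dropLast` avoids every `e_j` in two ways. Splitting off the
last letter gives the empty word plus `Σ_k t^{d_k} h(t)`. Otherwise, either `l` itself avoids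
every `e_j`, or `l = u e_j` with `u` avoiding; since the `e_j` do not overlap, every such `u e_j`
qualifies and `j`, `u` are unique, which gives `h(t) + Σ_j t^{deg e_j} h(t)`. -/

section Words

variable {X : Type*} (d : X → ℕ)

def Avoids {ι : Type*} (w : ι → List X) (l : List X) : Prop := ∀ j, ¬ w j <:+: l

theorem Avoids.of_infix {ι : Type*} {w : ι → List X} {l u : List X} (h : Avoids w l)
    (hu : u <:+: l) : Avoids w u :=
  fun j hj => h j (hj.trans hu)

theorem avoids_nil {ι : Type*} {w : ι → List X} (hw : ∀ j, w j ≠ []) : Avoids w [] :=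
  fun j hj => hw j (List.eq_nil_of_infix_nil hj)

theorem encard_iUnion_image_append {κ : Type*} [Fintype κ] {s : κ → List X}
    (hs : ∀ i j u v, u ++ s i = v ++ s j → i = j) (T : κ → Set (List X)) :
    (⋃ i, (· ++ s i) '' T i).encard = ∑ i, (T i).encard := by
  rw [Set.encard_iUnion_of_finite, finsum_eq_sum_of_fintype]
  · exact Finset.sum_congr rfl fun i _ => (List.append_left_injective _).encard_image _
  · refine fun i j hij => Set.disjoint_left.2 ?_
    rintro _ ⟨u, -, rfl⟩ ⟨v, -, huv⟩
    exact hij (hs _ _ _ _ huv.symm)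

variable {p : ℕ} {w : Fin p → List X}

theorem PairwiseNonOverlapping.not_infix_dropLast (hw : ∀ j, w j ≠ [])
    (hno : PairwiseNonOverlapping w) (i j : Fin p) : ¬ w i <:+: (w j).dropLast := by
  intro h
  by_cases hij : i = j
  · subst hij
    have hle := h.length_le
    have hpos := List.length_pos_iff.2 (hw i)
    rw [List.length_dropLast] at hle
    omega
  · exact hno.1 i j hij (h.trans (List.dropLast_prefix _).isInfix)

theorem PairwiseNonOverlapping.avoids_dropLast_append (hw : ∀ j, w j ≠ [])
    (hno : PairwiseNonOverlapping w) {u : List X} (hu : Avoids w u) (j : Fin p) :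
    Avoids w (u ++ w j).dropLast := by
  rw [List.dropLast_append_of_ne_nil (hw j)]
  intro i hi
  rcases List.infix_append_iff.1 hi with h | h | ⟨x, y, hxy, hx, hy⟩
  · exact hu i h
  · exact hno.not_infix_dropLast hw i j h
  rcases eq_or_ne x [] with rfl | hx0
  · exact hno.not_infix_dropLast hw i j (by simpa [hxy] using hy.isInfix)
  rcases eq_or_ne y [] with rfl | hy0
  · exact hu i (by simpa [hxy] using hx.isInfix)
  -- a proper suffix `y` of `w i` would be a proper prefix of `w j`
  refine hno.2 i j y hy0 (hxy ▸ List.suffix_append x y) ?_ (hy.trans (List.dropLast_prefix _)) ?_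
  · intro h
    have := congrArg List.length hxy
    rw [List.length_append, ← h] at this
    exact hx0 (List.eq_nil_of_length_eq_zero (by omega))
  · rintro rfl
    have hle := hy.length_le
    have hpos := List.length_pos_iff.2 (hw j)
    rw [List.length_dropLast] at hle
    omega

theorem PairwiseNonOverlapping.eq_of_append_eq (hno : PairwiseNonOverlapping w)
    {i j : Fin p} {u v : List X} (h : u ++ w i = v ++ w j) : i = j := by
  by_contra hij
  rcases List.suffix_or_suffix_of_suffix ⟨u, h⟩ (List.suffix_append v (w j)) with h' | h'
  · exact hno.1 i j hij h'.isInfix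
  · exact hno.1 j i (Ne.symm hij) h'.isInfix

theorem exists_eq_append_of_avoids_dropLast (hw : ∀ j, w j ≠ []) {l : List X}
    (hl : Avoids w l.dropLast) {j : Fin p} (hj : w j <:+: l) :
    ∃ u, l = u ++ w j ∧ Avoids w u := by
  obtain ⟨u, t, rfl⟩ := hj
  rcases eq_or_ne t [] with rfl | ht
  · refine ⟨u, (List.append_nil _), hl.of_infix ?_⟩
    rw [List.append_nil, List.dropLast_append_of_ne_nil (hw j)]
    exact List.infix_append_left
  · refine absurd ⟨u, t.dropLast, ?_⟩ (hl j)
    rw [List.dropLast_append_of_ne_nil ht, List.append_assoc]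

variable (w)

theorem setOf_avoids_dropLast_eq_nil_union_append_singleton (hw : ∀ j, w j ≠ []) (n : ℕ) :
    {l | (l.map d).sum = n ∧ Avoids w l.dropLast} =
      {l | l = [] ∧ (l.map d).sum = n} ∪
        ⋃ k, (· ++ [k]) '' {u | (u.map d).sum + d k = n ∧ Avoids w u} := by
  ext l
  rcases List.eq_nil_or_concat' l with rfl | ⟨u, k, rfl⟩
  · simp [avoids_nil hw]
  · simp

theorem setOf_avoids_dropLast_eq_avoids_union_append (hw : ∀ j, w j ≠ [])
    (hno : PairwiseNonOverlapping w) (n : ℕ) :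
    {l | (l.map d).sum = n ∧ Avoids w l.dropLast} =
      {l | (l.map d).sum = n ∧ Avoids w l} ∪
        ⋃ j, (· ++ w j) '' {u | (u.map d).sum + ((w j).map d).sum = n ∧ Avoids w u} := by
  ext l
  simp only [Set.mem_ofPred_eq, Set.mem_union, Set.mem_iUnion, Set.mem_image]
  constructor
  · rintro ⟨hn, hl⟩
    by_cases hgood : Avoids w l
    · exact .inl ⟨hn, hgood⟩
    obtain ⟨j, hj⟩ : ∃ j, w j <:+: l := by simpa [Avoids] using hgood
    obtain ⟨u, rfl, hu⟩ := exists_eq_append_of_avoids_dropLast hw hl hj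
    exact .inr ⟨j, u, ⟨by simpa using hn, hu⟩, rfl⟩
  · rintro (⟨hn, hl⟩ | ⟨j, u, ⟨hn, hu⟩, rfl⟩)
    · exact ⟨hn, hl.of_infix (List.dropLast_prefix l).isInfix⟩
    · exact ⟨by simpa using hn, hno.avoids_dropLast_append hw hu j⟩

theorem encard_avoids_add_sum_eq [Fintype X] (hw : ∀ j, w j ≠ [])
    (hno : PairwiseNonOverlapping w) (n : ℕ) :
    {l | (l.map d).sum = n ∧ Avoids w l}.encard +
        ∑ j, {u | (u.map d).sum + ((w j).map d).sum = n ∧ Avoids w u}.encard =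
      {l : List X | l = [] ∧ (l.map d).sum = n}.encard +
        ∑ k, {u | (u.map d).sum + d k = n ∧ Avoids w u}.encard := by
  rw [← encard_iUnion_image_append (fun i j u v h => hno.eq_of_append_eq h),
    ← encard_iUnion_image_append (fun i j u v h => (List.append_singleton_inj.1 h).2),
    ← Set.encard_union_eq, ← Set.encard_union_eq,
    ← setOf_avoids_dropLast_eq_avoids_union_append d w hw hno,
    ← setOf_avoids_dropLast_eq_nil_union_append_singleton d w hw]
  · refine Set.disjoint_left.2 ?_
    rintro _ ⟨rfl, -⟩ h
    obtain ⟨k, u, -, hu⟩ := Set.mem_iUnion.1 h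
    simp at hu
  · refine Set.disjoint_left.2 ?_
    rintro _ ⟨-, hl⟩ h
    obtain ⟨j, u, -, rfl⟩ := Set.mem_iUnion.1 h
    exact hl j List.infix_append_right

theorem finite_setOf_sum_map_le [Finite X] (hd : ∀ k, 1 ≤ d k) (n : ℕ) :
    {l : List X | (l.map d).sum ≤ n}.Finite :=
  (List.finite_length_le X n).subset fun l hl =>
    (List.length_map d ▸ List.length_le_sum_of_one_le _ (by simpa using fun k _ => hd k)).trans hl

theorem encard_setOf_nil (n : ℕ) :
    {l : List X | l = [] ∧ (l.map d).sum = n}.encard = if n = 0 then 1 else 0 := by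
  have : {l : List X | l = [] ∧ (l.map d).sum = n} = {l | l = [] ∧ n = 0} := by
    ext l
    constructor <;> rintro ⟨rfl, h⟩ <;> simp_all
  rw [this]
  split_ifs with hn <;> simp [hn]

theorem ncard_avoids_add_sum_eq [Fintype X] (hd : ∀ k, 1 ≤ d k) (hw : ∀ j, w j ≠ [])
    (hno : PairwiseNonOverlapping w) (n : ℕ) :
    ({l | (l.map d).sum = n ∧ Avoids w l}.ncard : ℤ) +
        ∑ j, ({u | (u.map d).sum + ((w j).map d).sum = n ∧ Avoids w u}.ncard : ℤ) =
      (if n = 0 then 1 else 0) +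
        ∑ k, ({u | (u.map d).sum + d k = n ∧ Avoids w u}.ncard : ℤ) := by
  have hcast (s : Set (List X)) (hs : ∀ l ∈ s, (l.map d).sum ≤ n) : s.encard = s.ncard :=
    ((finite_setOf_sum_map_le d hd n).subset hs).cast_ncard_eq.symm
  have h := encard_avoids_add_sum_eq d w hw hno n
  rw [encard_setOf_nil, hcast _ fun l hl => hl.1.le,
    Finset.sum_congr rfl fun j _ => hcast _ fun l hl => Nat.le.intro hl.1,
    Finset.sum_congr rfl fun k _ => hcast _ fun l hl => Nat.le.intro hl.1] at h
  norm_cast at h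
  exact_mod_cast h

end Words

open Submodule in
theorem LinearIndepOn.finrank_span_image {K M ι : Type*} [DivisionRing K]
    [AddCommGroup M] [Module K M] {v : ι → M} {s : Set ι} (hv : LinearIndepOn K v s) :
    Module.finrank K (span K (v '' s)) = s.ncard := by
  rw [Module.finrank, rank_span_set hv.id_image, ← hv.injOn.ncard_image]
  rfl

open Submodule in
theorem LinearIndependent.finrank_map_span_image {K M N ι : Type*} [DivisionRing K]
    [AddCommGroup M] [Module K M] [AddCommGroup N] [Module K N] {v : ι → M}
    (hv : LinearIndependent K v) {f : M →ₗ[K] N} {B : Set ι}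
    (hker : LinearMap.ker f = span K (v '' B)) (S : Set ι) :
    Module.finrank K (Submodule.map f (span K (v '' S))) = (S \ B).ncard := by
  have hmap : Submodule.map f (span K (v '' S)) = span K ((f ∘ v) '' (S \ B)) := by
    rw [map_span, ← Set.image_comp]
    refine le_antisymm (span_le.2 ?_) (span_mono (Set.image_mono Set.sdiff_subset))
    rintro _ ⟨i, hi, rfl⟩
    by_cases hiB : i ∈ B
    · have : v i ∈ LinearMap.ker f := hker ▸ subset_span ⟨i, hiB, rfl⟩
      simp only [Function.comp_apply, LinearMap.mem_ker.1 this, SetLike.mem_coe, zero_mem]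
    · exact subset_span ⟨i, ⟨hi, hiB⟩, rfl⟩
  have hind : LinearIndepOn K (f ∘ v) (S \ B) := by
    refine LinearIndependent.map (hv.linearIndepOn _) ?_
    rw [hker, ← Set.image_eq_range]
    exact hv.disjoint_span_image Set.disjoint_sdiff_left
  rw [hmap, hind.finrank_span_image]

section FreeAlgebra

variable {X : Type*}

theorem wordProd_append (u v : List X) : wordProd (u ++ v) = wordProd u * wordProd v := by
  simp [wordProd]

theorem basisFreeMonoid_ofList (l : List X) :
    FreeAlgebra.basisFreeMonoid ℂ X (FreeMonoid.ofList l) = wordProd l := by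
  simp [FreeAlgebra.basisFreeMonoid, FreeAlgebra.equivMonoidAlgebraFreeMonoid, wordProd,
    FreeMonoid.lift_apply]

theorem linearIndependent_wordProd :
    LinearIndependent ℂ (wordProd : List X → FreeAlgebra ℂ X) := by
  have := (FreeAlgebra.basisFreeMonoid ℂ X).linearIndependent.comp _
    FreeMonoid.ofList.injective
  simpa [Function.comp_def, basisFreeMonoid_ofList] using this

theorem span_range_wordProd : Submodule.span ℂ (Set.range (wordProd : List X → _)) = ⊤ := by
  rw [← (FreeAlgebra.basisFreeMonoid ℂ X).span_eq, ← FreeMonoid.ofList.surjective.range_comp]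
  simp [Function.comp_def, basisFreeMonoid_ofList]

open Submodule in
theorem mul_mul_mem_span_wordProd {S : Set (List X)} (hS : ∀ u l v, l ∈ S → u ++ l ++ v ∈ S)
    {x : FreeAlgebra ℂ X} (hx : x ∈ span ℂ (wordProd '' S)) (y z : FreeAlgebra ℂ X) :
    y * x * z ∈ span ℂ (wordProd '' S) := by
  have hmem : y * x * z ∈ span ℂ (Set.range wordProd) * span ℂ (wordProd '' S) *
      span ℂ (Set.range wordProd) := by
    refine mul_mem_mul (mul_mem_mul ?_ hx) ?_ <;> simp [span_range_wordProd]
  rw [span_mul_span, span_mul_span] at hmem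
  refine span_mono ?_ hmem
  rintro _ ⟨_, ⟨_, ⟨u, rfl⟩, _, ⟨l, hl, rfl⟩, rfl⟩, _, ⟨v, rfl⟩, rfl⟩
  exact ⟨u ++ l ++ v, hS u l v hl, by simp only [wordProd_append]⟩

def wordIdeal (S : Set (List X)) (hS : ∀ u l v, l ∈ S → u ++ l ++ v ∈ S) :
    TwoSidedIdeal (FreeAlgebra ℂ X) :=
  .mk' (Submodule.span ℂ (wordProd '' S)) (zero_mem _) add_mem neg_mem
    (fun {y x} hx => by simpa using mul_mul_mem_span_wordProd hS hx y 1)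
    (fun {x y} hx => by simpa using mul_mul_mem_span_wordProd hS hx 1 y)

theorem mem_wordIdeal {S : Set (List X)} (hS : ∀ u l v, l ∈ S → u ++ l ++ v ∈ S)
    {x : FreeAlgebra ℂ X} : x ∈ wordIdeal S hS ↔ x ∈ Submodule.span ℂ (wordProd '' S) :=
  TwoSidedIdeal.mem_mk' ..

theorem ker_mkAlgHom_wordProd {ι : Type*} (w : ι → List X) :
    LinearMap.ker (RingQuot.mkAlgHom ℂ
        (fun a b : FreeAlgebra ℂ X => (∃ j, a = wordProd (w j)) ∧ b = 0)).toLinearMap =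
      Submodule.span ℂ (wordProd '' {l | ∃ j, w j <:+: l}) := by
  set r := fun a b : FreeAlgebra ℂ X => (∃ j, a = wordProd (w j)) ∧ b = 0
  have hS : ∀ u l v, l ∈ {l | ∃ j, w j <:+: l} → u ++ l ++ v ∈ {l | ∃ j, w j <:+: l} :=
    fun u l v ⟨j, hj⟩ => ⟨j, hj.trans (List.infix_append u l v)⟩
  have hrel : ∀ j, RingQuot.mkAlgHom ℂ r (wordProd (w j)) = 0 := fun j => by
    simpa using RingQuot.mkAlgHom_rel ℂ (s := r) ⟨⟨j, rfl⟩, rfl⟩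
  apply le_antisymm
  · intro x hx
    have hq : RingQuot.mkRingHom r x = RingQuot.mkRingHom r 0 := by
      rw [← RingQuot.mkAlgHom_coe ℂ, RingHom.coe_coe, map_zero]
      exact hx
    rw [RingQuot.mkRingHom_def] at hq
    replace hq : Quot.mk (RingQuot.Rel r) x = Quot.mk _ 0 := congrArg RingQuot.toQuot hq
    have hgen : RingConGen.Rel r x 0 := RingQuot.eqvGen_rel_eq r ▸ Quot.eqvGen_exact hq
    have hle : ringConGen r ≤ (wordIdeal _ hS).ringCon := by
      refine RingCon.ringConGen_le.2 ?_
      rintro a b ⟨⟨j, rfl⟩, rfl⟩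
      rw [TwoSidedIdeal.rel_iff, sub_zero, mem_wordIdeal]
      exact Submodule.subset_span ⟨w j, ⟨j, List.infix_refl _⟩, rfl⟩
    simpa [TwoSidedIdeal.rel_iff, mem_wordIdeal] using hle hgen
  · rw [Submodule.span_le]
    rintro _ ⟨l, ⟨j, u, v, rfl⟩, rfl⟩
    simp [wordProd_append, hrel]

end FreeAlgebra

theorem finrank_map_mkAlgHom_wt {X ι : Type*} (d : X → ℕ) (w : ι → List X) (n : ℕ) :
    Module.finrank ℂ (Submodule.map (RingQuot.mkAlgHom ℂ
        (fun a b : FreeAlgebra ℂ X => (∃ j, a = wordProd (w j)) ∧ b = 0)).toLinearMap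
        (wt d n)) =
      {l | (l.map d).sum = n ∧ Avoids w l}.ncard := by
  have hwt : wt d n = Submodule.span ℂ (wordProd '' {l | (l.map d).sum = n}) := by
    rw [wt]
    congr 1
    ext x
    simp [eq_comm]
  rw [hwt, linearIndependent_wordProd.finrank_map_span_image (ker_mkAlgHom_wordProd w)]
  congr 1
  ext l
  simp [Avoids]

open PowerSeries in
theorem coeff_mk_ncard_mul_X_pow {α : Type*} (d : α → ℕ) (P : List α → Prop) (a n : ℕ) :
    coeff (R := ℤ) n (mk (fun m => ({l | (l.map d).sum = m ∧ P l}.ncard : ℤ)) * X ^ a) =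
      {l | (l.map d).sum + a = n ∧ P l}.ncard := by
  rw [coeff_mul_X_pow', coeff_mk]
  split_ifs with ha
  · congr 3
    ext l
    exact and_congr_left fun _ => by omega
  · have : {l : List α | (l.map d).sum + a = n ∧ P l} = ∅ :=
      Set.eq_empty_of_forall_notMem fun l hl => ha (hl.1 ▸ Nat.le_add_left a _)
    simp [this]

/-- for `A = ℂ⟨v₁,…,v_N⟩/(e₁,…,e_p)` with pairwise non-overlapping monomial
relations, `h(A;t)·(1 − Σ_k t^{d_k} + Σ_j t^{deg e_j}) = 1` in `ℤ[[t]]`. -/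
theorem stmt_14 (N p : ℕ) (d : Fin N → ℕ) (hd : ∀ k, 1 ≤ d k)
    (w : Fin p → List (Fin N)) (hw : ∀ j, w j ≠ []) (hno : PairwiseNonOverlapping w) :
    (PowerSeries.mk fun m =>
        (Module.finrank ℂ
          (Submodule.map
            (RingQuot.mkAlgHom ℂ
              (fun a b : FreeAlgebra ℂ (Fin N) => (∃ j, a = wordProd (w j)) ∧ b = 0)).toLinearMap
            (wt d m)) : ℤ)) *
      (1 - ∑ k : Fin N, PowerSeries.X ^ (d k)
         + ∑ j : Fin p, PowerSeries.X ^ (((w j).map d).sum))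
      = 1 := by
  simp only [finrank_map_mkAlgHom_wt]
  ext n
  simp only [mul_add, mul_sub, mul_one, Finset.mul_sum, map_add, map_sub, map_sum,
    coeff_mk_ncard_mul_X_pow, PowerSeries.coeff_mk, PowerSeries.coeff_one]
  linarith [ncard_avoids_add_sum_eq d w hd hw hno n]
end
end

section
/- Let n ≥ 2 and let c be the (n+1)×(n+1) matrix over the polynomial ring ℤ[X], with rows and columns indexed by ℤ/(n+1)ℤ, defined by c_{i,j} = 1 if j = i + 1 or j = i − 1 (mod n+1), and c_{i,j} = 0 otherwise. Then det( 1 − X·c + X²·1 ) = (1 − X^{n+1})² in ℤ[X], where 1 denotes the identity (n+1)×(n+1) matrix. -/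
open Polynomial Matrix

/-!
With `P` the permutation matrix of the shift `i ↦ i + 1` on `ZMod (n + 1)`, the adjacency matrix
of the cycle is `c = P + Pᵀ`, and since `P Pᵀ = 1` we get `1 - X c + X² = (1 - X P)(1 - X P)ᵀ`.
In the Leibniz expansion of `det (1 - X P)` only permutations with `σ i ∈ {i, i + 1}` contribute;
these are the identity and the full rotation, which give `1` and `sign · (-X)^(n+1) = -X^(n+1)`.
-/

namespace ZMod

theorem perm_eq_one_or_eq_addRight_one {m : ℕ} [NeZero m] (σ : Equiv.Perm (ZMod m))
    (h : ∀ i, σ i = i ∨ σ i = i + 1) : σ = 1 ∨ σ = Equiv.addRight 1 := by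
  refine or_iff_not_imp_left.2 fun hσ => ?_
  obtain ⟨i₀, hi₀⟩ : ∃ i, σ i ≠ i := by simpa [Equiv.ext_iff] using hσ
  have hshift : ∀ k : ℕ, σ (i₀ + k) = i₀ + k + 1 := by
    intro k
    induction k with
    | zero => simpa using (h i₀).resolve_left hi₀
    | succ k ih =>
      push_cast
      rw [← add_assoc]
      rcases h (i₀ + k + 1) with hfix | hstep
      · have hloop : i₀ + k = i₀ + k + 1 := σ.injective (ih.trans hfix.symm)
        exact hfix.trans (congrArg (· + 1) hloop)
      · exact hstep
  ext j
  simpa using hshift (j - i₀).val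

theorem sign_addRight_one (n : ℕ) :
    Equiv.Perm.sign (Equiv.addRight (1 : ZMod (n + 1))) = (-1) ^ n := by
  have hrot : Equiv.addRight (1 : ZMod (n + 1)) = finRotate (n + 1) := by
    ext i; exact (finRotate_apply i).symm
  rw [hrot]
  exact sign_finRotate (n + 1)

theorem add_one_ne_sub_one {m : ℕ} (hm : 2 < m) (i : ZMod m) : i + 1 ≠ i - 1 := by
  intro h
  have htwo : ((2 : ℕ) : ZMod m) = 0 := by
    push_cast
    linear_combination h
  rw [natCast_eq_zero_iff] at htwo
  exact absurd (Nat.le_of_dvd two_pos htwo) (by omega)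

end ZMod

namespace Matrix

theorem one_sub_smul_add_transpose_add_sq_smul {ι R : Type*} [Fintype ι] [DecidableEq ι]
    [CommRing R] {P : Matrix ι ι R} (hP : P * Pᵀ = 1) (a : R) :
    1 - a • (P + Pᵀ) + a ^ 2 • 1 = (1 - a • P) * (1 - a • P)ᵀ := by
  rw [transpose_sub, transpose_one, transpose_smul, sub_mul, mul_sub, mul_sub,
    smul_mul_smul_comm, hP]
  simp only [one_mul, mul_one, sq]
  module

theorem det_one_sub_smul_permMatrix_addRight_one {R : Type*} [CommRing R] {n : ℕ} (hn : n ≠ 0)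
    (a : R) : det (1 - a • (Equiv.addRight (1 : ZMod (n + 1))).permMatrix R) = 1 - a ^ (n + 1) := by
  have hone : (1 : ZMod (n + 1)) ≠ 0 := by
    have : Fact (1 < n + 1) := ⟨by omega⟩
    exact one_ne_zero
  have hsucc (i : ZMod (n + 1)) : i + 1 ≠ i := fun h => hone (add_eq_left.mp h)
  set M := 1 - a • (Equiv.addRight (1 : ZMod (n + 1))).permMatrix R
  have hM (i j : ZMod (n + 1)) : M i j = (if i = j then 1 else 0) - if i + 1 = j then a else 0 := by
    simp [M, PEquiv.toMatrix_apply, Equiv.toPEquiv_apply, one_apply]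
  have hne : (1 : Equiv.Perm (ZMod (n + 1))) ≠ Equiv.addRight 1 := fun h =>
    hone (by simpa using (Equiv.ext_iff.mp h 0).symm)
  have hvanish (σ : Equiv.Perm (ZMod (n + 1))) (hσ : σ ∉ ({1, Equiv.addRight 1} : Finset _)) :
      Equiv.Perm.sign σ * ∏ i, Mᵀ (σ i) i = 0 := by
    obtain ⟨i, hi⟩ : ∃ i, ¬ (σ i = i ∨ σ i = i + 1) := by
      by_contra! h
      simp only [Finset.mem_insert, Finset.mem_singleton] at hσ
      exact hσ (ZMod.perm_eq_one_or_eq_addRight_one σ h)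
    refine mul_eq_zero_of_right _ (Finset.prod_eq_zero (Finset.mem_univ i) ?_)
    rw [transpose_apply, hM]
    simp_all [eq_comm]
  rw [← det_transpose, det_apply', ← Finset.sum_subset (Finset.subset_univ _) fun σ _ => hvanish σ,
    Finset.sum_pair hne]
  have hcycle : (-1 : R) ^ n * (-a) ^ (n + 1) = -a ^ (n + 1) := by
    rw [neg_pow a, ← mul_assoc, ← pow_add, Odd.neg_one_pow ⟨n, by ring⟩, neg_one_mul]
  simp [hM, hsucc, hone, ZMod.sign_addRight_one, hcycle, sub_eq_add_neg]

end Matrix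

/-- STATEMENT 18: for the adjacency matrix `c` of the doubled cycle (affine `A_n`) quiver,
`det(1 − X·c + X²·1) = (1 − X^{n+1})²` in `ℤ[X]`. -/
theorem stmt_18 (n : ℕ) (hn : 2 ≤ n)
    (c : Matrix (ZMod (n + 1)) (ZMod (n + 1)) (Polynomial ℤ))
    (hc : ∀ i j : ZMod (n + 1), c i j = if j = i + 1 ∨ j = i - 1 then 1 else 0) :
    Matrix.det
      ((1 : Matrix (ZMod (n + 1)) (ZMod (n + 1)) (Polynomial ℤ)) - (Polynomial.X : Polynomial ℤ) • c
        + ((Polynomial.X : Polynomial ℤ) ^ 2) • (1 : Matrix (ZMod (n + 1)) (ZMod (n + 1)) (Polynomial ℤ)))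
      = (1 - Polynomial.X ^ (n + 1)) ^ 2 := by
  set P := (Equiv.addRight (1 : ZMod (n + 1))).permMatrix ℤ[X]
  have hcP : c = P + Pᵀ := by
    refine Matrix.ext fun i j => ?_
    have hij := ZMod.add_one_ne_sub_one (by omega : 2 < n + 1) i
    rw [hc, Matrix.add_apply, transpose_apply]
    simp only [P, PEquiv.toMatrix_apply, Equiv.toPEquiv_apply, Equiv.coe_addRight,
      Option.mem_def, Option.some.injEq, eq_comm (a := i + 1), ← eq_sub_iff_add_eq]
    split_ifs <;> simp_all
  have hPP : P * Pᵀ = 1 := by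
    rw [transpose_permMatrix, ← permMatrix_mul, inv_mul_cancel, permMatrix_one]
  rw [hcP, one_sub_smul_add_transpose_add_sq_smul hPP, det_mul, det_transpose,
    det_one_sub_smul_permMatrix_addRight_one (by omega), sq]
end

section
/- Let n ≥ 4 and let c be the (n+1)×(n+1) symmetric 0-1 matrix over ℤ[X], with rows and columns indexed by {0, 1, …, n}, whose nonzero entries are c_{i,j} = c_{j,i} = 1 exactly for the pairs {0,2}, {1,2}, {n−1, n−2}, {n, n−2}, and {i, i+1} for 2 ≤ i ≤ n−3. Then det( 1 − X·c + X²·1 ) = (1 − X⁴)² · ( Σ_{i=0}^{n−3} X^{2i} ) in ℤ[X], where 1 denotes the identity (n+1)×(n+1) matrix; equivalently (1 − X²)·det(1 − X·c + X²·1) = (1 − X⁴)²·(1 − X^{2n−4}). -/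
open Polynomial

def affDEdge (n : ℕ) (a b : ℕ) : Prop :=
  (a = 0 ∧ b = 2) ∨ (a = 1 ∧ b = 2) ∨ (a = n - 1 ∧ b = n - 2) ∨ (a = n ∧ b = n - 2) ∨
    (2 ≤ a ∧ a ≤ n - 3 ∧ b = a + 1)

instance (n a b : ℕ) : Decidable (affDEdge n a b) := by unfold affDEdge; infer_instance

private lemma sum_two' {M : Type*} [AddCommMonoid M] {ι : Type*} [Fintype ι] [DecidableEq ι]
    (f : ι → M) (a b : ι) (hab : a ≠ b) (h : ∀ i, i ≠ a → i ≠ b → f i = 0) :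
    ∑ i, f i = f a + f b := by
  classical
  rw [← Finset.sum_subset (Finset.subset_univ {a, b})
    (fun x _ hx => by
      simp only [Finset.mem_insert, Finset.mem_singleton] at hx
      push_neg at hx
      exact h x hx.1 hx.2)]
  rw [Finset.sum_pair hab]

private lemma sum_one' {M : Type*} [AddCommMonoid M] {ι : Type*} [Fintype ι] [DecidableEq ι]
    (f : ι → M) (a : ι) (h : ∀ i, i ≠ a → f i = 0) :
    ∑ i, f i = f a :=
  Finset.sum_eq_single_of_mem a (Finset.mem_univ a) (fun i _ hi => h i hi)

private lemma val_succAbove' {N : ℕ} (p : Fin (N+1)) (i : Fin N) :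
    ((p.succAbove i : Fin (N+1)) : ℕ) = if (i:ℕ) < (p:ℕ) then (i:ℕ) else (i:ℕ)+1 := by
  rw [Fin.succAbove]
  split_ifs with h1 h2 h3 <;>
    simp_all [Fin.lt_def, Fin.coe_castSucc, Fin.val_succ]

/-- fork-ended graph matrix: path `0..m-1` with two extra leaves `m, m+1` attached to `m-1`. -/
noncomputable def forkE (m : ℕ) : Matrix (Fin (m+2)) (Fin (m+2)) (Polynomial ℤ) :=
  Matrix.of fun i j =>
    if (i:ℕ) = (j:ℕ) then 1 + X^2
    else if ((j:ℕ) = (i:ℕ)+1 ∧ (i:ℕ)+2 ≤ m) ∨ ((i:ℕ) = (j:ℕ)+1 ∧ (j:ℕ)+2 ≤ m) ∨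
      ((i:ℕ)+1 = m ∧ ((j:ℕ) = m ∨ (j:ℕ) = m+1)) ∨
      ((j:ℕ)+1 = m ∧ ((i:ℕ) = m ∨ (i:ℕ) = m+1)) then -X else 0

lemma forkE_minor00 (m : ℕ) :
    (forkE (m+2)).submatrix Fin.succ Fin.succ = forkE (m+1) := by
  funext i j
  simp only [Matrix.submatrix_apply, forkE, Matrix.of_apply, Fin.val_succ]
  split_ifs <;> first | omega | rfl | (simp_all only [true_or, or_true, false_and, and_false, false_or, or_false, true_and, and_true, not_true, not_false_iff] <;> omega)

lemma forkE_minor11 (m : ℕ) :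
    (forkE (m+2)).submatrix (Fin.succ ∘ Fin.succAbove 0) (Fin.succAbove 1 ∘ Fin.succ)
      = forkE m := by
  have hv1 : ((1 : Fin (m+4)) : ℕ) = 1 := by
    rw [show ((1 : Fin (m+4)) : ℕ) = 1 % (m+4) from rfl, Nat.mod_eq_of_lt (by omega)]
  have z3 : ((0 : Fin (m+3)) : ℕ) = 0 := rfl
  funext i j
  simp only [Matrix.submatrix_apply, Function.comp_apply, forkE, Matrix.of_apply,
    Fin.val_succ, val_succAbove', z3, hv1]
  split_ifs <;> first | omega | rfl | (simp_all only [true_or, or_true, false_and, and_false, false_or, or_false, true_and, and_true, not_true, not_false_iff] <;> omega)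


lemma det_forkE : ∀ m : ℕ, (forkE m).det = (1 + X^2) * (1 + X^(2*m+2)) := by
  intro m
  induction m using Nat.twoStepInduction with
  | zero =>
    rw [show (forkE 0).det = ((forkE 0).det : Polynomial ℤ) from rfl, Matrix.det_fin_two]
    simp [forkE]
  | one =>
    rw [show (forkE 1).det = ((forkE 1).det : Polynomial ℤ) from rfl, Matrix.det_fin_three]
    simp [forkE]
    ring
  | more m ih1 ih2 =>
    have hv1 : ((1 : Fin (m+4)) : ℕ) = 1 := by
      rw [show ((1 : Fin (m+4)) : ℕ) = 1 % (m+4) from rfl, Nat.mod_eq_of_lt (by omega)]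
    have z4 : ((0 : Fin (m+4)) : ℕ) = 0 := rfl
    have z3 : ((0 : Fin (m+3)) : ℕ) = 0 := rfl
    rw [Matrix.det_succ_row_zero]
    rw [sum_two' _ 0 1 (by
        intro h
        have := congrArg Fin.val h
        rw [show ((0 : Fin (m+4)) : ℕ) = 0 from rfl, hv1] at this
        omega)
      (by
        intro j hj0 hj1
        have z4 : ((0 : Fin (m+4)) : ℕ) = 0 := rfl
        have hv1x : ((1 : Fin (m+4)) : ℕ) = 1 := by
          rw [show ((1 : Fin (m+4)) : ℕ) = 1 % (m+4) from rfl, Nat.mod_eq_of_lt (by omega)]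
        have hv0 : (j:ℕ) ≠ 0 := fun h => hj0 (Fin.ext (by rw [h, z4]))
        have hv1' : (j:ℕ) ≠ 1 := fun h => hj1 (Fin.ext (by rw [h, hv1x]))
        have hz : forkE (m+2) 0 j = 0 := by
          simp only [forkE, Matrix.of_apply, z4]
          split_ifs <;> first | omega | rfl | (simp_all only [true_or, or_true, false_and, and_false, false_or, or_false, true_and, and_true, not_true, not_false_iff] <;> omega)
        rw [hz]
        ring)]
    rw [Fin.succAbove_zero, forkE_minor00]
    have e00 : forkE (m+2) 0 0 = 1 + X^2 := by
      simp only [forkE, Matrix.of_apply, z4]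
      split_ifs <;> first | omega | rfl | (simp_all only [true_or, or_true, false_and, and_false, false_or, or_false, true_and, and_true, not_true, not_false_iff] <;> omega)
    have e01 : forkE (m+2) 0 1 = -X := by
      simp only [forkE, Matrix.of_apply, z4, hv1]
      split_ifs <;> first | omega | rfl | (simp_all only [true_or, or_true, false_and, and_false, false_or, or_false, true_and, and_true, not_true, not_false_iff] <;> omega)
    rw [e00, e01, z4, hv1]
    -- now handle det of the second minor
    have hB : (((forkE (m+2)).submatrix Fin.succ (Fin.succAbove 1))).det
        = (-X) * (forkE m).det := by
      rw [Matrix.det_succ_column_zero]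
      rw [sum_one' _ 0 (by
        intro i hi
        have z3' : ((0 : Fin (m+3)) : ℕ) = 0 := rfl
        have hv1y : ((1 : Fin (m+4)) : ℕ) = 1 := by
          rw [show ((1 : Fin (m+4)) : ℕ) = 1 % (m+4) from rfl, Nat.mod_eq_of_lt (by omega)]
        have hvi : (i:ℕ) ≠ 0 := fun h => hi (Fin.ext (by rw [h, z3']))
        have hz : (forkE (m+2)).submatrix Fin.succ (Fin.succAbove 1) i 0 = 0 := by
          simp only [Matrix.submatrix_apply, forkE, Matrix.of_apply, Fin.val_succ,
            val_succAbove', z3', hv1y]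
          split_ifs <;> first | omega | rfl | (simp_all only [true_or, or_true, false_and, and_false, false_or, or_false, true_and, and_true, not_true, not_false_iff] <;> omega)
        rw [hz]
        ring)]
      have eB00 : (forkE (m+2)).submatrix Fin.succ (Fin.succAbove 1) 0 0 = -X := by
        simp only [Matrix.submatrix_apply, forkE, Matrix.of_apply, Fin.val_succ,
          val_succAbove', z3, hv1]
        split_ifs <;> first | omega | rfl | (simp_all only [true_or, or_true, false_and, and_false, false_or, or_false, true_and, and_true, not_true, not_false_iff] <;> omega)
      rw [eB00, Matrix.submatrix_submatrix, forkE_minor11, z3]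
      ring
    rw [hB, ih1, ih2]
    ring


lemma affDEdge_iff (m a b : ℕ) : affDEdge (m+4) a b ↔
    ((a = 0 ∧ b = 2) ∨ (a = 1 ∧ b = 2) ∨ (a = m+3 ∧ b = m+2) ∨ (a = m+4 ∧ b = m+2) ∨
      (2 ≤ a ∧ a ≤ m+1 ∧ b = a+1)) := by
  unfold affDEdge; omega

/-- the full affine D matrix -/
noncomputable def dmat (m : ℕ) : Matrix (Fin (m+5)) (Fin (m+5)) (Polynomial ℤ) :=
  Matrix.of fun i j =>
    if (i:ℕ) = (j:ℕ) then 1 + X^2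
    else if affDEdge (m+4) (i:ℕ) (j:ℕ) ∨ affDEdge (m+4) (j:ℕ) (i:ℕ) then -X else 0

set_option maxHeartbeats 1000000 in
/-- STATEMENT 19: for the adjacency matrix `c` of the doubled affine `D_n` quiver (`n ≥ 4`),
`det(1 − X·c + X²·1) = (1 − X⁴)² · (Σ_{i=0}^{n−3} X^{2i})` in `ℤ[X]`. -/
theorem stmt_19 (n : ℕ) (hn : 4 ≤ n)
    (c : Matrix (Fin (n + 1)) (Fin (n + 1)) (Polynomial ℤ))
    (hc : ∀ i j : Fin (n + 1),
      c i j = if affDEdge n i.val j.val ∨ affDEdge n j.val i.val then 1 else 0) :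
    Matrix.det
      ((1 : Matrix (Fin (n + 1)) (Fin (n + 1)) (Polynomial ℤ))
        - (Polynomial.X : Polynomial ℤ) • c
        + ((Polynomial.X : Polynomial ℤ) ^ 2) •
            (1 : Matrix (Fin (n + 1)) (Fin (n + 1)) (Polynomial ℤ)))
      = (1 - Polynomial.X ^ 4) ^ 2 * ∑ i ∈ Finset.range (n - 2), Polynomial.X ^ (2 * i) := by
  obtain ⟨m, rfl⟩ : ∃ m, n = m + 4 := ⟨n - 4, by omega⟩
  have v2 : ((2 : Fin (m+5)) : ℕ) = 2 := by
    rw [show ((2 : Fin (m+5)) : ℕ) = 2 % (m+5) from rfl, Nat.mod_eq_of_lt (by omega)]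
  have v1 : ((1 : Fin (m+4)) : ℕ) = 1 := by
    rw [show ((1 : Fin (m+4)) : ℕ) = 1 % (m+4) from rfl, Nat.mod_eq_of_lt (by omega)]
  have z5 : ((0 : Fin (m+5)) : ℕ) = 0 := rfl
  have z4 : ((0 : Fin (m+4)) : ℕ) = 0 := rfl
  have z3 : ((0 : Fin (m+3)) : ℕ) = 0 := rfl
  have hM : ((1 : Matrix (Fin (m+4+1)) (Fin (m+4+1)) (Polynomial ℤ))
        - (X : Polynomial ℤ) • c + ((X : Polynomial ℤ)^2) • 1) = dmat m := by
    funext i j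
    simp only [Matrix.sub_apply, Matrix.add_apply, Matrix.smul_apply, Matrix.one_apply,
      hc i j, dmat, Matrix.of_apply, smul_eq_mul]
    by_cases hij : i = j
    · subst hij
      rw [if_pos rfl, if_pos rfl, if_neg (by
          simp only [affDEdge_iff]; omega)]
      ring
    · rw [if_neg hij, if_neg (fun h => hij (Fin.ext h))]
      split_ifs <;> ring
  rw [hM, Matrix.det_succ_row_zero]
  rw [sum_two' _ 0 2 (by
      intro h
      have := congrArg Fin.val h
      rw [z5, v2] at this
      omega)
    (by
      intro j hj0 hj2
      have v2' : ((2 : Fin (m+5)) : ℕ) = 2 := by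
        rw [show ((2 : Fin (m+5)) : ℕ) = 2 % (m+5) from rfl, Nat.mod_eq_of_lt (by omega)]
      have hv0 : (j:ℕ) ≠ 0 := fun h => hj0 (Fin.ext (by rw [h]; rfl))
      have hv2 : (j:ℕ) ≠ 2 := fun h => hj2 (Fin.ext (by rw [h, v2']))
      have hz : dmat m 0 j = 0 := by
        simp only [dmat, Matrix.of_apply, z5, affDEdge_iff]
        rw [if_neg (by first | omega | tauto | decide), if_neg (by first | omega | tauto | decide)]
      rw [hz]
      ring)]
  have e00 : dmat m 0 0 = 1 + X^2 := by
    simp only [dmat, Matrix.of_apply, z5, if_true]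
  have e02 : dmat m 0 2 = -X := by
    simp only [dmat, Matrix.of_apply, z5, v2, affDEdge_iff]
    rw [if_neg (by first | omega | tauto | decide), if_pos (by first | omega | tauto | decide)]
  have hA : (dmat m).submatrix Fin.succ Fin.succ = forkE (m+2) := by
    funext i j
    simp only [Matrix.submatrix_apply, dmat, forkE, Matrix.of_apply, Fin.val_succ, affDEdge_iff]
    exact if_congr (by omega) rfl (if_congr (by omega) rfl rfl)
  have s20 : (((2 : Fin (m+5)).succAbove (0 : Fin (m+4))) : ℕ) = 0 := by
    rw [val_succAbove', z4, v2, if_pos (by omega)]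
  have hB : ((dmat m).submatrix Fin.succ (Fin.succAbove 2)).det
      = X * ((1 + X^2) * (forkE m).det) := by
    rw [Matrix.det_succ_column_zero]
    rw [sum_one' _ 1 (by
      intro i hi
      have v1' : ((1 : Fin (m+4)) : ℕ) = 1 := by
        rw [show ((1 : Fin (m+4)) : ℕ) = 1 % (m+4) from rfl, Nat.mod_eq_of_lt (by omega)]
      have hvi : (i:ℕ) ≠ 1 := fun h => hi (Fin.ext (by rw [h, v1']))
      have hz : (dmat m).submatrix Fin.succ (Fin.succAbove 2) i 0 = 0 := by
        simp only [Matrix.submatrix_apply, s20, dmat, Matrix.of_apply, Fin.val_succ,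
          affDEdge_iff]
        rw [if_neg (by first | omega | tauto | decide), if_neg (by first | omega | tauto | decide)]
      rw [hz]
      ring)]
    have eB10 : (dmat m).submatrix Fin.succ (Fin.succAbove 2) 1 0 = -X := by
      simp only [Matrix.submatrix_apply, s20, dmat, Matrix.of_apply, Fin.val_succ, v1,
        affDEdge_iff]
      rw [if_neg (by first | omega | tauto | decide), if_pos (by first | omega | tauto | decide)]
    rw [eB10, v1]
    have s10 : (((1 : Fin (m+4)).succAbove (0 : Fin (m+3))) : ℕ) = 0 := by
      rw [val_succAbove', z3, v1, if_pos (by omega)]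
    have hC : (((dmat m).submatrix Fin.succ (Fin.succAbove 2)).submatrix
        (Fin.succAbove 1) Fin.succ).det = (1 + X^2) * (forkE m).det := by
      rw [Matrix.det_succ_row_zero]
      rw [sum_one' _ 0 (by
        intro l hl
        have hvl : (l:ℕ) ≠ 0 := fun h => hl (Fin.ext (by rw [h]; rfl))
        have hcol : (((2 : Fin (m+5)).succAbove (Fin.succ l)) : ℕ) = (l:ℕ) + 2 := by
          rw [val_succAbove', Fin.val_succ, v2, if_neg (by omega)]
        have hz : ((dmat m).submatrix Fin.succ (Fin.succAbove 2)).submatrix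
            (Fin.succAbove 1) Fin.succ 0 l = 0 := by
          simp only [Matrix.submatrix_apply, s10, hcol, dmat, Matrix.of_apply, Fin.val_succ,
            affDEdge_iff]
          rw [if_neg (by first | omega | tauto | decide), if_neg (by first | omega | tauto | decide)]
        rw [hz]
        ring)]
      have hcol0 : (((2 : Fin (m+5)).succAbove (Fin.succ (0 : Fin (m+3)))) : ℕ) = 1 := by
        rw [val_succAbove', Fin.val_succ, z3, v2, if_pos (by omega)]
      have eC00 : ((dmat m).submatrix Fin.succ (Fin.succAbove 2)).submatrix
          (Fin.succAbove 1) Fin.succ 0 0 = 1 + X^2 := by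
        simp only [Matrix.submatrix_apply, s10, hcol0, dmat, Matrix.of_apply, Fin.val_succ]
        rw [if_pos (by first | omega | tauto | decide)]
      have hInner : (((dmat m).submatrix Fin.succ (Fin.succAbove 2)).submatrix
          (Fin.succAbove 1) Fin.succ).submatrix Fin.succ (Fin.succAbove 0) = forkE m := by
        rw [Fin.succAbove_zero]
        funext k l
        have hr : ((Fin.succ ((1 : Fin (m+4)).succAbove (Fin.succ k))) : ℕ) = (k:ℕ) + 3 := by
          rw [Fin.val_succ, val_succAbove', Fin.val_succ, v1, if_neg (by omega)]
        have hcv : (((2 : Fin (m+5)).succAbove (Fin.succ (Fin.succ l))) : ℕ) = (l:ℕ) + 3 := by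
          rw [val_succAbove', Fin.val_succ, Fin.val_succ, v2, if_neg (by omega)]
        simp only [Matrix.submatrix_apply, hr, hcv, dmat, forkE, Matrix.of_apply, affDEdge_iff]
        exact if_congr (by omega) rfl (if_congr (by omega) rfl rfl)
      rw [eC00, hInner, z3]
      ring
    rw [hC]
    ring
  rw [Fin.succAbove_zero, hA, hB, e00, e02, z5, v2, det_forkE, det_forkE,
    show m + 4 - 2 = m + 2 by omega]
  have key : (∑ i ∈ Finset.range (m+2), (X : Polynomial ℤ)^(2*i)) * ((X : Polynomial ℤ)^2 - 1)
      = ((X : Polynomial ℤ)^2)^(m+2) - 1 := by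
    simp only [pow_mul]
    exact geom_sum_mul _ _
  linear_combination ((1 + (X : Polynomial ℤ)^2)^2 * (1 - (X : Polynomial ℤ)^2)) * key
end
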